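/- In the setting above, suppose instead the mediator density model κ̃ is arbitrary (possibly misspecified, but strictly positive) while the outcome regression η_j is correct. Define ψ̃_θ as ψ_θ but with w^(1) computed from κ̃, i.e., w̃^(1) = κ̃(a*, m, c, n)/κ̃(a, m, c, n), and with u_j^(1) replaced by ũ_j^(1)(a, a*, c, n) = Σ_m η_j(a, m, c, n) κ̃(a*, m, c, n). Then E[ψ̃_θ(a, a*; O)] = θ_C(a, a*). -/
import Mathlib


open Finset

open scoped Classical in
noncomputable def Pr {Ω : Type*} [Fintype Ω] (p : Ω → ℝ) (E : Ω → Prop) : ℝ :=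
  ∑ ω, if E ω then p ω else 0

noncomputable def EV {Ω : Type*} [Fintype Ω] (p : Ω → ℝ) (X : Ω → ℝ) : ℝ :=
  ∑ ω, p ω * X ω

noncomputable def cPr {Ω : Type*} [Fintype Ω] (p : Ω → ℝ) (E F : Ω → Prop) : ℝ :=
  Pr p (fun ω => E ω ∧ F ω) / Pr p F

open scoped Classical in
noncomputable def cEV {Ω : Type*} [Fintype Ω] (p : Ω → ℝ) (X : Ω → ℝ) (F : Ω → Prop) : ℝ :=
  (∑ ω, if F ω then p ω * X ω else 0) / Pr p F

section Helpers
open scoped Classical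

lemma Pr_nonneg' {Ω : Type*} [Fintype Ω] (p : Ω → ℝ) (hp : ∀ ω, 0 ≤ p ω) (E : Ω → Prop) :
    0 ≤ Pr p E := by
  unfold Pr
  exact Finset.sum_nonneg fun ω _ => by split_ifs with h; exacts [hp ω, le_rfl]

lemma Pr_zero_imp {Ω : Type*} [Fintype Ω] (p : Ω → ℝ) (hp : ∀ ω, 0 ≤ p ω) (E : Ω → Prop)
    (h : Pr p E = 0) : ∀ ω, E ω → p ω = 0 := by
  intro ω hω
  unfold Pr at h
  have := (Finset.sum_eq_zero_iff_of_nonneg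
    (fun ω _ => by split_ifs with h'; exacts [hp ω, le_rfl])).mp h ω (Finset.mem_univ ω)
  rwa [if_pos hω] at this

lemma Pr_congr' {Ω : Type*} [Fintype Ω] (p : Ω → ℝ) {E F : Ω → Prop} (h : ∀ ω, E ω ↔ F ω) :
    Pr p E = Pr p F := by
  unfold Pr
  exact Finset.sum_congr rfl fun ω _ => if_congr (h ω) rfl rfl

lemma Pr_mono' {Ω : Type*} [Fintype Ω] (p : Ω → ℝ) (hp : ∀ ω, 0 ≤ p ω) {E F : Ω → Prop}
    (h : ∀ ω, E ω → F ω) : Pr p E ≤ Pr p F := by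
  unfold Pr
  refine Finset.sum_le_sum fun ω _ => ?_
  by_cases hE : E ω
  · rw [if_pos hE, if_pos (h ω hE)]
  · rw [if_neg hE]; split_ifs with hF; exacts [hp ω, le_rfl]

lemma master_sum {Ω γ : Type*} [Fintype Ω] [DecidableEq γ] (g : Ω → γ) (T : Finset γ)
    (hg : ∀ ω, g ω ∈ T) (f : Ω → ℝ) :
    ∑ ω, f ω = ∑ x ∈ T, ∑ ω, if g ω = x then f ω else 0 := by
  rw [Finset.sum_comm]
  refine Finset.sum_congr rfl fun ω _ => Eq.symm ?_
  refine (Finset.sum_eq_single_of_mem (g ω) (hg ω)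
    (fun x _ hx => if_neg (fun h => hx h.symm))).trans (if_pos rfl)

lemma sum_collapse' {Ω β : Type*} [Fintype Ω] [Fintype β]
    (h : Ω → β) (E : Ω → Prop) (p : Ω → ℝ) :
    ∑ m : β, Pr p (fun ω => h ω = m ∧ E ω) = Pr p E := by
  unfold Pr
  rw [Finset.sum_comm]
  refine Finset.sum_congr rfl fun ω _ => ?_
  show (∑ m : β, @ite ℝ (h ω = m ∧ E ω) (Classical.propDecidable _) (p ω) 0) = _
  refine (Finset.sum_eq_single_of_mem (h ω) (Finset.mem_univ _)
    (fun m _ hm => if_neg (fun hc => hm hc.1.symm))).trans ?_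
  by_cases hE : E ω
  · rw [if_pos ⟨rfl, hE⟩, if_pos hE]
  · rw [if_neg (fun hc => hE hc.2), if_neg hE]

lemma sum_reorder4 {α β γ' : Type*} [Fintype α] [Fintype β] [Fintype γ']
    (s : Finset ℕ) (X : α → β → γ' → ℕ → ℝ) :
    (∑ b : α, ∑ m : β, ∑ c : γ', ∑ n ∈ s, X b m c n)
      = ∑ c : γ', ∑ n ∈ s, ∑ b : α, ∑ m : β, X b m c n := by
  calc (∑ b : α, ∑ m : β, ∑ c : γ', ∑ n ∈ s, X b m c n)
      = ∑ b : α, ∑ c : γ', ∑ m : β, ∑ n ∈ s, X b m c n :=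
        Finset.sum_congr rfl fun b _ => Finset.sum_comm
    _ = ∑ c : γ', ∑ b : α, ∑ m : β, ∑ n ∈ s, X b m c n := Finset.sum_comm
    _ = ∑ c : γ', ∑ b : α, ∑ n ∈ s, ∑ m : β, X b m c n :=
        Finset.sum_congr rfl fun c _ => Finset.sum_congr rfl fun b _ => Finset.sum_comm
    _ = ∑ c : γ', ∑ n ∈ s, ∑ b : α, ∑ m : β, X b m c n :=
        Finset.sum_congr rfl fun c _ => Finset.sum_comm

lemma sum_affine {β : Type*} [Fintype β] (f g : β → ℝ) (u P caS : ℝ) (hcaS : caS ≠ 0)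
    (hg : (∑ m : β, g m) = 1) :
    (∑ m : β, (1 / caS * (f m - u) + u) * (g m * (caS * P)))
      = P * ((∑ m : β, f m * g m) - u) + u * (caS * P) := by
  have h1 : ∀ m, (1 / caS * (f m - u) + u) * (g m * (caS * P))
      = (f m * g m) * P + (u * (caS * P) - u * P) * g m := by
    intro m; field_simp; ring
  rw [Finset.sum_congr rfl fun m _ => h1 m, Finset.sum_add_distrib,
    ← Finset.sum_mul, ← Finset.mul_sum, hg]
  ring

lemma sum_affine0 {β : Type*} [Fintype β] (f g : β → ℝ) (u caS PA P : ℝ)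
    (hg : (∑ m : β, g m) = 1) :
    (∑ m : β, (0 / caS * (f m - u) + u) * (g m * (PA * P))) = u * (PA * P) := by
  have h1 : ∀ m, (0 / caS * (f m - u) + u) * (g m * (PA * P)) = (u * (PA * P)) * g m := by
    intro m; rw [zero_div]; ring
  rw [Finset.sum_congr rfl fun m _ => h1 m, ← Finset.mul_sum, hg, mul_one]

lemma ite_sum_pull {ι : Type*} (s : Finset ι) (P : Prop) [Decidable P] (f : ι → ℝ) :
    (if P then ∑ j ∈ s, f j else 0) = ∑ j ∈ s, if P then f j else 0 := by
  by_cases h : P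
  · simp only [if_pos h]
  · simp only [if_neg h, Finset.sum_const_zero]

end Helpers

/-- Double robustness of the EIF-based estimator with respect to the mediator
density: if the outcome regression η is correct, the EIF functional computed with
an arbitrary strictly positive (possibly misspecified) mediator density κ̃ still
has mean θ_C(a,a*). -/
theorem eif_theta_robust_mediator
    {Ω 𝓜 𝓒 : Type*} [Fintype Ω] [Fintype 𝓜] [Fintype 𝓒]
    (p : Ω → ℝ) (hp : ∀ ω, 0 ≤ p ω) (hp1 : ∑ ω, p ω = 1)
    (N : Ω → ℕ) (hN : ∀ ω, 0 < N ω)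
    (C : Ω → 𝓒) (A : Ω → Fin 2) (M : Ω → 𝓜) (Y : Ω → ℕ → ℝ)
    (π : ℝ) (hπ : 0 < π ∧ π < 1) (hA : Pr p (fun ω => A ω = 1) = π)
    (hindep : ∀ (a : Fin 2) (n : ℕ) (c : 𝓒),
      Pr p (fun ω => A ω = a ∧ N ω = n ∧ C ω = c) =
        Pr p (fun ω => A ω = a) * Pr p (fun ω => N ω = n ∧ C ω = c))
    (hpos : ∀ (a : Fin 2) (m : 𝓜) (c : 𝓒) (n : ℕ),
      0 < Pr p (fun ω => N ω = n ∧ C ω = c) →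
      0 < Pr p (fun ω => A ω = a ∧ M ω = m ∧ C ω = c ∧ N ω = n))
    (η : ℕ → Fin 2 → 𝓜 → 𝓒 → ℕ → ℝ)
    (hη : ∀ j a m c n, η j a m c n =
      cEV p (fun ω => Y ω j) (fun ω => A ω = a ∧ M ω = m ∧ C ω = c ∧ N ω = n))
    (κ : Fin 2 → 𝓜 → 𝓒 → ℕ → ℝ)
    (hκ : ∀ a m c n, κ a m c n =
      cPr p (fun ω => M ω = m) (fun ω => A ω = a ∧ C ω = c ∧ N ω = n))
    -- arbitrary, possibly misspecified but strictly positive, mediator density model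
    (κt : Fin 2 → 𝓜 → 𝓒 → ℕ → ℝ) (hκt_pos : ∀ a m c n, 0 < κt a m c n)
    (u1t : ℕ → Fin 2 → Fin 2 → 𝓒 → ℕ → ℝ)
    (hu1t : ∀ j a astar c n, u1t j a astar c n =
      ∑ m : 𝓜, η j a m c n * κt astar m c n)
    (a astar : Fin 2) (θC : ℝ)
    (hθ : θC = EV p (fun ω => (1 / (N ω : ℝ)) *
      ∑ j ∈ Finset.range (N ω), ∑ m : 𝓜,
        η j a m (C ω) (N ω) * κ astar m (C ω) (N ω))) :
    EV p (fun ω => (1 / (N ω : ℝ)) * ∑ j ∈ Finset.range (N ω),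
      ((if A ω = a then (1:ℝ) else 0) /
          (π ^ (a : ℕ) * (1 - π) ^ (1 - (a : ℕ))) *
          (κt astar (M ω) (C ω) (N ω) / κt a (M ω) (C ω) (N ω)) *
          (Y ω j - η j a (M ω) (C ω) (N ω)) +
        (if A ω = astar then (1:ℝ) else 0) /
          (π ^ (astar : ℕ) * (1 - π) ^ (1 - (astar : ℕ))) *
          (η j a (M ω) (C ω) (N ω) - u1t j a astar (C ω) (N ω)) +
        u1t j a astar (C ω) (N ω))) = θC := by
  classical
  obtain ⟨hπ0, hπ1⟩ := hπ
  have hfin2 : ∀ x : Fin 2, x = 0 ∨ x = 1 := by decide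
  -- basic facts about Pr (A = b)
  have hPa01 : Pr p (fun ω => A ω = 0) + Pr p (fun ω => A ω = 1) = 1 := by
    unfold Pr
    rw [← Finset.sum_add_distrib, ← hp1]
    refine Finset.sum_congr rfl fun ω _ => ?_
    rcases hfin2 (A ω) with h | h
    · rw [if_pos h, if_neg (by simp [h]), add_zero]
    · rw [if_neg (by simp [h]), if_pos h, zero_add]
  have hPaval : ∀ b : Fin 2, Pr p (fun ω => A ω = b) = π ^ (b:ℕ) * (1-π) ^ (1-(b:ℕ)) := by
    intro b
    rcases hfin2 b with rfl | rfl
    · simp only [Fin.val_zero, pow_zero, pow_one, one_mul, Nat.sub_zero]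
      rw [hA] at hPa01; linarith
    · simp only [Fin.val_one, pow_one, pow_zero, mul_one, Nat.sub_self]
      exact hA
  have hPapos : ∀ b : Fin 2, 0 < Pr p (fun ω => A ω = b) := by
    intro b
    rw [hPaval b]
    exact mul_pos (pow_pos hπ0 _) (pow_pos (by linarith) _)
  have hPncnn : ∀ (c : 𝓒) (n : ℕ), 0 ≤ Pr p (fun ω => N ω = n ∧ C ω = c) :=
    fun c n => Pr_nonneg' p hp _
  have hACN : ∀ (b : Fin 2) (c : 𝓒) (n : ℕ),
      Pr p (fun ω => A ω = b ∧ C ω = c ∧ N ω = n)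
        = Pr p (fun ω => A ω = b) * Pr p (fun ω => N ω = n ∧ C ω = c) := by
    intro b c n
    rw [← hindep b n c]
    exact Pr_congr' p (fun ω => by tauto)
  have hΩ : Nonempty Ω := by
    rcases isEmpty_or_nonempty Ω with h | h
    · rw [Finset.univ_eq_empty, Finset.sum_empty] at hp1; norm_num at hp1
    · exact h
  have hACN_pos : ∀ (b : Fin 2) (c : 𝓒) (n : ℕ),
      0 < Pr p (fun ω => N ω = n ∧ C ω = c) →
      0 < Pr p (fun ω => A ω = b ∧ C ω = c ∧ N ω = n) := by
    intro b c n hP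
    obtain ⟨ω0⟩ := hΩ
    exact lt_of_lt_of_le (hpos b (M ω0) c n hP)
      (Pr_mono' p hp (fun ω h => ⟨h.1, h.2.2.1, h.2.2.2⟩))
  have hκPr : ∀ (b : Fin 2) (m : 𝓜) (c : 𝓒) (n : ℕ),
      κ b m c n * (Pr p (fun ω => A ω = b) * Pr p (fun ω => N ω = n ∧ C ω = c))
        = Pr p (fun ω => A ω = b ∧ M ω = m ∧ C ω = c ∧ N ω = n) := by
    intro b m c n
    by_cases h0 : Pr p (fun ω => N ω = n ∧ C ω = c) = 0
    · rw [h0, mul_zero, mul_zero]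
      symm
      unfold Pr
      refine Finset.sum_eq_zero fun ω _ => ?_
      by_cases hF : A ω = b ∧ M ω = m ∧ C ω = c ∧ N ω = n
      · rw [if_pos hF, Pr_zero_imp p hp _ h0 ω ⟨hF.2.2.2, hF.2.2.1⟩]
      · rw [if_neg hF]
    · have hPnc : 0 < Pr p (fun ω => N ω = n ∧ C ω = c) :=
        lt_of_le_of_ne (hPncnn c n) (Ne.symm h0)
      have h2 := hACN_pos b c n hPnc
      have hκ' := hκ b m c n
      unfold cPr at hκ'
      have hnum : Pr p (fun ω => M ω = m ∧ (A ω = b ∧ C ω = c ∧ N ω = n))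
          = Pr p (fun ω => A ω = b ∧ M ω = m ∧ C ω = c ∧ N ω = n) :=
        Pr_congr' p fun ω => by tauto
      rw [hnum] at hκ'
      rw [hκ', ← hACN b c n]
      exact div_mul_cancel₀ _ (ne_of_gt h2)
  have hκ1 : ∀ (b : Fin 2) (c : 𝓒) (n : ℕ), Pr p (fun ω => N ω = n ∧ C ω = c) ≠ 0 →
      (∑ m : 𝓜, κ b m c n) = 1 := by
    intro b c n h0
    have hPnc : 0 < Pr p (fun ω => N ω = n ∧ C ω = c) :=
      lt_of_le_of_ne (hPncnn c n) (Ne.symm h0)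
    have h2 := hACN_pos b c n hPnc
    have hkey : (∑ m : 𝓜, κ b m c n) * Pr p (fun ω => A ω = b ∧ C ω = c ∧ N ω = n)
        = Pr p (fun ω => A ω = b ∧ C ω = c ∧ N ω = n) := by
      rw [Finset.sum_mul]
      calc ∑ m : 𝓜, κ b m c n * Pr p (fun ω => A ω = b ∧ C ω = c ∧ N ω = n)
          = ∑ m : 𝓜, Pr p (fun ω => M ω = m ∧ (A ω = b ∧ C ω = c ∧ N ω = n)) := by
            refine Finset.sum_congr rfl fun m _ => ?_
            rw [hκ b m c n]
            unfold cPr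
            exact div_mul_cancel₀ _ (ne_of_gt h2)
        _ = Pr p (fun ω => A ω = b ∧ C ω = c ∧ N ω = n) := sum_collapse' M _ p
    exact mul_right_cancel₀ (ne_of_gt h2) (by rw [hkey, one_mul])
  have hiff : ∀ (ω : Ω) (b : Fin 2) (m : 𝓜) (c : 𝓒) (n : ℕ),
      ((A ω, M ω, C ω, N ω) = (b, m, c, n)) ↔ (A ω = b ∧ M ω = m ∧ C ω = c ∧ N ω = n) := by
    intro ω b m c n
    constructor
    · intro h
      injection h with h1 h
      injection h with h2 h
      injection h with h3 h4
      exact ⟨h1, h2, h3, h4⟩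
    · rintro ⟨h1, h2, h3, h4⟩
      rw [h1, h2, h3, h4]
  -- the outcome-regression residual has conditional mean zero on every fiber
  have hL1 : ∀ (j : ℕ) (m : 𝓜) (c : 𝓒) (n : ℕ),
      (∑ ω, if (A ω, M ω, C ω, N ω) = (a, m, c, n)
        then p ω * (Y ω j - η j a m c n) else 0) = 0 := by
    intro j m c n
    by_cases h0 : Pr p (fun ω => A ω = a ∧ M ω = m ∧ C ω = c ∧ N ω = n) = 0
    · refine Finset.sum_eq_zero fun ω _ => ?_
      by_cases h : (A ω, M ω, C ω, N ω) = (a, m, c, n)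
      · rw [if_pos h, Pr_zero_imp p hp _ h0 ω ((hiff ω a m c n).mp h), zero_mul]
      · rw [if_neg h]
    · have hη' := hη j a m c n
      unfold cEV at hη'
      have hY : (∑ ω, if A ω = a ∧ M ω = m ∧ C ω = c ∧ N ω = n then p ω * Y ω j else 0)
          = η j a m c n * Pr p (fun ω => A ω = a ∧ M ω = m ∧ C ω = c ∧ N ω = n) := by
        rw [hη', div_mul_cancel₀ _ h0]
        refine Finset.sum_congr rfl fun ω _ => ?_
        by_cases h : A ω = a ∧ M ω = m ∧ C ω = c ∧ N ω = n
        · rw [if_pos h, if_pos h]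
        · rw [if_neg h, if_neg h]
      calc (∑ ω, if (A ω, M ω, C ω, N ω) = (a, m, c, n)
              then p ω * (Y ω j - η j a m c n) else 0)
          = ∑ ω, ((if A ω = a ∧ M ω = m ∧ C ω = c ∧ N ω = n then p ω * Y ω j else 0)
              - (if A ω = a ∧ M ω = m ∧ C ω = c ∧ N ω = n then p ω else 0) * η j a m c n) := by
            refine Finset.sum_congr rfl fun ω _ => ?_
            by_cases h : A ω = a ∧ M ω = m ∧ C ω = c ∧ N ω = n
            · rw [if_pos ((hiff ω a m c n).mpr h), if_pos h, if_pos h]; ring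
            · rw [if_neg (fun hc => h ((hiff ω a m c n).mp hc)), if_neg h, if_neg h]; ring
        _ = (∑ ω, if A ω = a ∧ M ω = m ∧ C ω = c ∧ N ω = n then p ω * Y ω j else 0)
              - (∑ ω, if A ω = a ∧ M ω = m ∧ C ω = c ∧ N ω = n then p ω else 0)
                * η j a m c n := by
            rw [Finset.sum_sub_distrib, Finset.sum_mul]
        _ = 0 := by
            rw [hY]
            have hPrF : (∑ ω, if A ω = a ∧ M ω = m ∧ C ω = c ∧ N ω = n then p ω else 0)
                = Pr p (fun ω => A ω = a ∧ M ω = m ∧ C ω = c ∧ N ω = n) := by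
              unfold Pr
              refine Finset.sum_congr rfl fun ω _ => ?_
              by_cases h : A ω = a ∧ M ω = m ∧ C ω = c ∧ N ω = n
              · rw [if_pos h, if_pos h]
              · rw [if_neg h, if_neg h]
            rw [hPrF]; ring
  -- fiber probabilities in terms of κ
  have hL2 : ∀ (b : Fin 2) (m : 𝓜) (c : 𝓒) (n : ℕ),
      (∑ ω, if (A ω, M ω, C ω, N ω) = (b, m, c, n) then p ω else 0)
        = κ b m c n * (Pr p (fun ω => A ω = b) * Pr p (fun ω => N ω = n ∧ C ω = c)) := by
    intro b m c n
    rw [hκPr b m c n]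
    refine Finset.sum_congr rfl fun ω _ => ?_
    by_cases h : A ω = b ∧ M ω = m ∧ C ω = c ∧ N ω = n
    · rw [if_pos ((hiff ω b m c n).mpr h), if_pos h]
    · rw [if_neg (fun hc => h ((hiff ω b m c n).mp hc)), if_neg h]
  -- evaluation of the EIF integrand on a single fiber
  have key : ∀ (b : Fin 2) (m : 𝓜) (c : 𝓒) (n : ℕ),
      (∑ ω, if (A ω, M ω, C ω, N ω) = (b, m, c, n) then
          p ω * ((1 / (N ω : ℝ)) * ∑ j ∈ Finset.range (N ω),
            ((if A ω = a then (1:ℝ) else 0) /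
                (π ^ (a : ℕ) * (1 - π) ^ (1 - (a : ℕ))) *
                (κt astar (M ω) (C ω) (N ω) / κt a (M ω) (C ω) (N ω)) *
                (Y ω j - η j a (M ω) (C ω) (N ω)) +
              (if A ω = astar then (1:ℝ) else 0) /
                (π ^ (astar : ℕ) * (1 - π) ^ (1 - (astar : ℕ))) *
                (η j a (M ω) (C ω) (N ω) - u1t j a astar (C ω) (N ω)) +
              u1t j a astar (C ω) (N ω))) else 0)
      = ((1 / (n : ℝ)) * ∑ j ∈ Finset.range n,
          ((if b = astar then (1:ℝ) else 0) /
              (π ^ (astar : ℕ) * (1 - π) ^ (1 - (astar : ℕ))) *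
              (η j a m c n - u1t j a astar c n) + u1t j a astar c n))
        * (κ b m c n * (Pr p (fun ω => A ω = b) * Pr p (fun ω => N ω = n ∧ C ω = c))) := by
    intro b m c n
    have hsplit : ∀ ω : Ω,
        (if (A ω, M ω, C ω, N ω) = (b, m, c, n) then
          p ω * ((1 / (N ω : ℝ)) * ∑ j ∈ Finset.range (N ω),
            ((if A ω = a then (1:ℝ) else 0) /
                (π ^ (a : ℕ) * (1 - π) ^ (1 - (a : ℕ))) *
                (κt astar (M ω) (C ω) (N ω) / κt a (M ω) (C ω) (N ω)) *
                (Y ω j - η j a (M ω) (C ω) (N ω)) +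
              (if A ω = astar then (1:ℝ) else 0) /
                (π ^ (astar : ℕ) * (1 - π) ^ (1 - (astar : ℕ))) *
                (η j a (M ω) (C ω) (N ω) - u1t j a astar (C ω) (N ω)) +
              u1t j a astar (C ω) (N ω))) else 0)
        = ((1 / (n : ℝ)) * ((if b = a then (1:ℝ) else 0) /
              (π ^ (a : ℕ) * (1 - π) ^ (1 - (a : ℕ))) *
              (κt astar m c n / κt a m c n)))
            * (if (A ω, M ω, C ω, N ω) = (b, m, c, n) then
                (∑ j ∈ Finset.range n, p ω * (Y ω j - η j a m c n)) else 0)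
          + ((1 / (n : ℝ)) * ∑ j ∈ Finset.range n,
              ((if b = astar then (1:ℝ) else 0) /
                  (π ^ (astar : ℕ) * (1 - π) ^ (1 - (astar : ℕ))) *
                  (η j a m c n - u1t j a astar c n) + u1t j a astar c n))
            * (if (A ω, M ω, C ω, N ω) = (b, m, c, n) then p ω else 0) := by
      intro ω
      by_cases h : (A ω, M ω, C ω, N ω) = (b, m, c, n)
      · obtain ⟨hb, hm, hc, hn⟩ := (hiff ω b m c n).mp h
        rw [if_pos h, if_pos h, if_pos h, hb, hm, hc, hn]
        simp only [Finset.sum_add_distrib, ← Finset.mul_sum]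
        ring
      · rw [if_neg h, if_neg h, if_neg h]
        ring
    calc (∑ ω, if (A ω, M ω, C ω, N ω) = (b, m, c, n) then
          p ω * ((1 / (N ω : ℝ)) * ∑ j ∈ Finset.range (N ω),
            ((if A ω = a then (1:ℝ) else 0) /
                (π ^ (a : ℕ) * (1 - π) ^ (1 - (a : ℕ))) *
                (κt astar (M ω) (C ω) (N ω) / κt a (M ω) (C ω) (N ω)) *
                (Y ω j - η j a (M ω) (C ω) (N ω)) +
              (if A ω = astar then (1:ℝ) else 0) /
                (π ^ (astar : ℕ) * (1 - π) ^ (1 - (astar : ℕ))) *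
                (η j a (M ω) (C ω) (N ω) - u1t j a astar (C ω) (N ω)) +
              u1t j a astar (C ω) (N ω))) else 0)
        = ∑ ω, (((1 / (n : ℝ)) * ((if b = a then (1:ℝ) else 0) /
              (π ^ (a : ℕ) * (1 - π) ^ (1 - (a : ℕ))) *
              (κt astar m c n / κt a m c n)))
            * (if (A ω, M ω, C ω, N ω) = (b, m, c, n) then
                (∑ j ∈ Finset.range n, p ω * (Y ω j - η j a m c n)) else 0)
          + ((1 / (n : ℝ)) * ∑ j ∈ Finset.range n,
              ((if b = astar then (1:ℝ) else 0) /
                  (π ^ (astar : ℕ) * (1 - π) ^ (1 - (astar : ℕ))) *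
                  (η j a m c n - u1t j a astar c n) + u1t j a astar c n))
            * (if (A ω, M ω, C ω, N ω) = (b, m, c, n) then p ω else 0)) :=
          Finset.sum_congr rfl fun ω _ => hsplit ω
      _ = ((1 / (n : ℝ)) * ((if b = a then (1:ℝ) else 0) /
              (π ^ (a : ℕ) * (1 - π) ^ (1 - (a : ℕ))) *
              (κt astar m c n / κt a m c n)))
            * (∑ ω, if (A ω, M ω, C ω, N ω) = (b, m, c, n) then
                (∑ j ∈ Finset.range n, p ω * (Y ω j - η j a m c n)) else 0)
          + ((1 / (n : ℝ)) * ∑ j ∈ Finset.range n,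
              ((if b = astar then (1:ℝ) else 0) /
                  (π ^ (astar : ℕ) * (1 - π) ^ (1 - (astar : ℕ))) *
                  (η j a m c n - u1t j a astar c n) + u1t j a astar c n))
            * (∑ ω, if (A ω, M ω, C ω, N ω) = (b, m, c, n) then p ω else 0) := by
          rw [Finset.sum_add_distrib, ← Finset.mul_sum, ← Finset.mul_sum]
      _ = ((1 / (n : ℝ)) * ∑ j ∈ Finset.range n,
              ((if b = astar then (1:ℝ) else 0) /
                  (π ^ (astar : ℕ) * (1 - π) ^ (1 - (astar : ℕ))) *
                  (η j a m c n - u1t j a astar c n) + u1t j a astar c n))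
            * (κ b m c n * (Pr p (fun ω => A ω = b) * Pr p (fun ω => N ω = n ∧ C ω = c))) := by
          rw [hL2 b m c n]
          have hz : (∑ ω, if (A ω, M ω, C ω, N ω) = (b, m, c, n) then
              (∑ j ∈ Finset.range n, p ω * (Y ω j - η j a m c n)) else 0)
              * ((1 / (n : ℝ)) * ((if b = a then (1:ℝ) else 0) /
              (π ^ (a : ℕ) * (1 - π) ^ (1 - (a : ℕ))) *
              (κt astar m c n / κt a m c n))) = 0 := by
            by_cases hba : b = a
            · subst hba
              have hswap : (∑ ω, if (A ω, M ω, C ω, N ω) = (b, m, c, n) then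
                  (∑ j ∈ Finset.range n, p ω * (Y ω j - η j b m c n)) else 0)
                  = ∑ j ∈ Finset.range n, ∑ ω, if (A ω, M ω, C ω, N ω) = (b, m, c, n)
                    then p ω * (Y ω j - η j b m c n) else 0 :=
                (Finset.sum_congr rfl fun ω _ => ite_sum_pull _ _ _).trans
                  Finset.sum_comm
              rw [hswap, Finset.sum_eq_zero fun j _ => hL1 j m c n, zero_mul]
            · rw [if_neg hba]
              ring
          linear_combination hz
  -- per-(c,n) aggregation over (b,m)
  have main2 : ∀ (c : 𝓒) (n : ℕ),
      (∑ b : Fin 2, ∑ m : 𝓜,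
        ((1 / (n : ℝ)) * ∑ j ∈ Finset.range n,
          ((if b = astar then (1:ℝ) else 0) /
              (π ^ (astar : ℕ) * (1 - π) ^ (1 - (astar : ℕ))) *
              (η j a m c n - u1t j a astar c n) + u1t j a astar c n))
        * (κ b m c n * (Pr p (fun ω => A ω = b) * Pr p (fun ω => N ω = n ∧ C ω = c))))
      = Pr p (fun ω => N ω = n ∧ C ω = c) *
          ((1 / (n : ℝ)) * ∑ j ∈ Finset.range n, ∑ m : 𝓜, η j a m c n * κ astar m c n) := by
    intro c n
    by_cases hP : Pr p (fun ω => N ω = n ∧ C ω = c) = 0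
    · simp [hP]
    · have hcaS_ne : (π ^ (astar : ℕ) * (1 - π) ^ (1 - (astar : ℕ))) ≠ 0 :=
        ne_of_gt (mul_pos (pow_pos hπ0 _) (pow_pos (by linarith) _))
      have hPaS := hPaval astar
      have hj : ∀ (b : Fin 2) (j : ℕ),
          (∑ m : 𝓜, ((if b = astar then (1:ℝ) else 0) /
              (π ^ (astar : ℕ) * (1 - π) ^ (1 - (astar : ℕ))) *
              (η j a m c n - u1t j a astar c n) + u1t j a astar c n)
            * (κ b m c n * (Pr p (fun ω => A ω = b) * Pr p (fun ω => N ω = n ∧ C ω = c))))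
          = (if b = astar then
              (Pr p (fun ω => N ω = n ∧ C ω = c) *
                ((∑ m : 𝓜, η j a m c n * κ astar m c n) - u1t j a astar c n)) else 0)
            + u1t j a astar c n *
              (Pr p (fun ω => A ω = b) * Pr p (fun ω => N ω = n ∧ C ω = c)) := by
        intro b j
        by_cases hb : b = astar
        · rw [hb, if_pos rfl, if_pos rfl, hPaS]
          exact sum_affine (fun m => η j a m c n) (fun m => κ astar m c n)
            (u1t j a astar c n) (Pr p (fun ω => N ω = n ∧ C ω = c)) _
            hcaS_ne (hκ1 astar c n hP)
        · rw [if_neg hb, if_neg hb, zero_add]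
          exact sum_affine0 (fun m => η j a m c n) (fun m => κ b m c n)
            (u1t j a astar c n) _ _ _ (hκ1 b c n hP)
      calc (∑ b : Fin 2, ∑ m : 𝓜,
            ((1 / (n : ℝ)) * ∑ j ∈ Finset.range n,
              ((if b = astar then (1:ℝ) else 0) /
                  (π ^ (astar : ℕ) * (1 - π) ^ (1 - (astar : ℕ))) *
                  (η j a m c n - u1t j a astar c n) + u1t j a astar c n))
            * (κ b m c n * (Pr p (fun ω => A ω = b) * Pr p (fun ω => N ω = n ∧ C ω = c))))
          = ∑ b : Fin 2, (1 / (n : ℝ)) * ∑ j ∈ Finset.range n, ∑ m : 𝓜,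
              ((if b = astar then (1:ℝ) else 0) /
                  (π ^ (astar : ℕ) * (1 - π) ^ (1 - (astar : ℕ))) *
                  (η j a m c n - u1t j a astar c n) + u1t j a astar c n)
              * (κ b m c n * (Pr p (fun ω => A ω = b) * Pr p (fun ω => N ω = n ∧ C ω = c))) := by
            refine Finset.sum_congr rfl fun b _ => ?_
            rw [Finset.sum_congr rfl fun m (_ : m ∈ Finset.univ) =>
              (by rw [mul_assoc, Finset.sum_mul] :
                ((1 / (n : ℝ)) * ∑ j ∈ Finset.range n,
                  ((if b = astar then (1:ℝ) else 0) /
                      (π ^ (astar : ℕ) * (1 - π) ^ (1 - (astar : ℕ))) *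
                      (η j a m c n - u1t j a astar c n) + u1t j a astar c n))
                * (κ b m c n * (Pr p (fun ω => A ω = b) * Pr p (fun ω => N ω = n ∧ C ω = c)))
                = (1 / (n : ℝ)) * ∑ j ∈ Finset.range n,
                  ((if b = astar then (1:ℝ) else 0) /
                      (π ^ (astar : ℕ) * (1 - π) ^ (1 - (astar : ℕ))) *
                      (η j a m c n - u1t j a astar c n) + u1t j a astar c n)
                  * (κ b m c n * (Pr p (fun ω => A ω = b) * Pr p (fun ω => N ω = n ∧ C ω = c)))),
              ← Finset.mul_sum, Finset.sum_comm]
        _ = ∑ b : Fin 2, (1 / (n : ℝ)) * ∑ j ∈ Finset.range n,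
              ((if b = astar then
                (Pr p (fun ω => N ω = n ∧ C ω = c) *
                  ((∑ m : 𝓜, η j a m c n * κ astar m c n) - u1t j a astar c n)) else 0)
              + u1t j a astar c n *
                (Pr p (fun ω => A ω = b) * Pr p (fun ω => N ω = n ∧ C ω = c))) := by
            refine Finset.sum_congr rfl fun b _ => ?_
            rw [Finset.sum_congr rfl fun j (_ : j ∈ Finset.range n) => hj b j]
        _ = Pr p (fun ω => N ω = n ∧ C ω = c) *
              ((1 / (n : ℝ)) * ∑ j ∈ Finset.range n, ∑ m : 𝓜,
                η j a m c n * κ astar m c n) := by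
            rw [Fin.sum_univ_two]
            rcases hfin2 astar with h | h
            · subst h
              rw [Finset.sum_congr rfl fun j (_ : j ∈ Finset.range n) =>
                  (by rw [if_pos rfl] : ((if (0 : Fin 2) = 0 then
                      (Pr p (fun ω => N ω = n ∧ C ω = c) *
                        ((∑ m : 𝓜, η j a m c n * κ 0 m c n) - u1t j a 0 c n)) else 0)
                    + u1t j a 0 c n *
                      (Pr p (fun ω => A ω = 0) * Pr p (fun ω => N ω = n ∧ C ω = c)))
                    = (Pr p (fun ω => N ω = n ∧ C ω = c) *
                        ((∑ m : 𝓜, η j a m c n * κ 0 m c n) - u1t j a 0 c n)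
                    + u1t j a 0 c n *
                      (Pr p (fun ω => A ω = 0) * Pr p (fun ω => N ω = n ∧ C ω = c)))),
                Finset.sum_congr rfl fun j (_ : j ∈ Finset.range n) =>
                  (by rw [if_neg (by decide), zero_add] : ((if (1 : Fin 2) = 0 then
                      (Pr p (fun ω => N ω = n ∧ C ω = c) *
                        ((∑ m : 𝓜, η j a m c n * κ 0 m c n) - u1t j a 0 c n)) else 0)
                    + u1t j a 0 c n *
                      (Pr p (fun ω => A ω = 1) * Pr p (fun ω => N ω = n ∧ C ω = c)))
                    = u1t j a 0 c n *
                      (Pr p (fun ω => A ω = 1) * Pr p (fun ω => N ω = n ∧ C ω = c))),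
                Finset.sum_add_distrib, ← Finset.mul_sum, Finset.sum_sub_distrib,
                ← Finset.sum_mul, ← Finset.sum_mul]
              linear_combination ((1 / (n : ℝ)) * (∑ j ∈ Finset.range n, u1t j a 0 c n) *
                Pr p (fun ω => N ω = n ∧ C ω = c)) * hPa01
            · subst h
              rw [Finset.sum_congr rfl fun j (_ : j ∈ Finset.range n) =>
                  (by rw [if_neg (by decide), zero_add] : ((if (0 : Fin 2) = 1 then
                      (Pr p (fun ω => N ω = n ∧ C ω = c) *
                        ((∑ m : 𝓜, η j a m c n * κ 1 m c n) - u1t j a 1 c n)) else 0)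
                    + u1t j a 1 c n *
                      (Pr p (fun ω => A ω = 0) * Pr p (fun ω => N ω = n ∧ C ω = c)))
                    = u1t j a 1 c n *
                      (Pr p (fun ω => A ω = 0) * Pr p (fun ω => N ω = n ∧ C ω = c))),
                Finset.sum_congr rfl fun j (_ : j ∈ Finset.range n) =>
                  (by rw [if_pos rfl] : ((if (1 : Fin 2) = 1 then
                      (Pr p (fun ω => N ω = n ∧ C ω = c) *
                        ((∑ m : 𝓜, η j a m c n * κ 1 m c n) - u1t j a 1 c n)) else 0)
                    + u1t j a 1 c n *
                      (Pr p (fun ω => A ω = 1) * Pr p (fun ω => N ω = n ∧ C ω = c)))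
                    = (Pr p (fun ω => N ω = n ∧ C ω = c) *
                        ((∑ m : 𝓜, η j a m c n * κ 1 m c n) - u1t j a 1 c n)
                    + u1t j a 1 c n *
                      (Pr p (fun ω => A ω = 1) * Pr p (fun ω => N ω = n ∧ C ω = c)))),
                Finset.sum_add_distrib, ← Finset.mul_sum, Finset.sum_sub_distrib,
                ← Finset.sum_mul, ← Finset.sum_mul]
              linear_combination ((1 / (n : ℝ)) * (∑ j ∈ Finset.range n, u1t j a 1 c n) *
                Pr p (fun ω => N ω = n ∧ C ω = c)) * hPa01
    -- θ side
  have hgT2 : ∀ ω : Ω, (C ω, N ω) ∈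
      ((Finset.univ : Finset 𝓒) ×ˢ Finset.image N Finset.univ) :=
    fun ω => Finset.mem_product.mpr
      ⟨Finset.mem_univ _, Finset.mem_image_of_mem N (Finset.mem_univ ω)⟩
  have hθ2 : θC = ∑ c : 𝓒, ∑ n ∈ Finset.image N Finset.univ,
      Pr p (fun ω => N ω = n ∧ C ω = c) *
        ((1 / (n : ℝ)) * ∑ j ∈ Finset.range n, ∑ m : 𝓜,
          η j a m c n * κ astar m c n) := by
    rw [hθ]
    unfold EV
    rw [master_sum (fun ω => (C ω, N ω)) _ hgT2, Finset.sum_product]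
    refine Finset.sum_congr rfl fun c _ => Finset.sum_congr rfl fun n _ => ?_
    beta_reduce
    calc (∑ ω, if (C ω, N ω) = (c, n) then
            p ω * ((1 / (N ω : ℝ)) * ∑ j ∈ Finset.range (N ω), ∑ m : 𝓜,
              η j a m (C ω) (N ω) * κ astar m (C ω) (N ω)) else 0)
        = ∑ ω, (if (C ω, N ω) = (c, n) then p ω else 0) *
            ((1 / (n : ℝ)) * ∑ j ∈ Finset.range n, ∑ m : 𝓜,
              η j a m c n * κ astar m c n) := by
          refine Finset.sum_congr rfl fun ω _ => ?_
          by_cases h : (C ω, N ω) = (c, n)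
          · have hc : C ω = c := by injection h
            have hn : N ω = n := by injection h
            rw [if_pos h, if_pos h, hc, hn]
          · rw [if_neg h, if_neg h, zero_mul]
      _ = (∑ ω, if (C ω, N ω) = (c, n) then p ω else 0) *
            ((1 / (n : ℝ)) * ∑ j ∈ Finset.range n, ∑ m : 𝓜,
              η j a m c n * κ astar m c n) := by
          rw [Finset.sum_mul]
      _ = Pr p (fun ω => N ω = n ∧ C ω = c) *
            ((1 / (n : ℝ)) * ∑ j ∈ Finset.range n, ∑ m : 𝓜,
              η j a m c n * κ astar m c n) := by
          congr 1
          unfold Pr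
          refine Finset.sum_congr rfl fun ω _ => ?_
          by_cases h : N ω = n ∧ C ω = c
          · rw [if_pos (show (C ω, N ω) = (c, n) by rw [h.1, h.2]), if_pos h]
          · rw [if_neg (fun hc => h (by constructor <;> injection hc <;>
              simp_all)), if_neg h]
  -- assembly
  have hgT : ∀ ω : Ω, (A ω, M ω, C ω, N ω) ∈
      ((Finset.univ : Finset (Fin 2)) ×ˢ (Finset.univ : Finset 𝓜) ×ˢ
        (Finset.univ : Finset 𝓒) ×ˢ Finset.image N Finset.univ) := by
    intro ω
    refine Finset.mem_product.mpr ⟨Finset.mem_univ _, ?_⟩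
    refine Finset.mem_product.mpr ⟨Finset.mem_univ _, ?_⟩
    refine Finset.mem_product.mpr ⟨Finset.mem_univ _, ?_⟩
    exact Finset.mem_image_of_mem N (Finset.mem_univ ω)
  rw [hθ2]
  unfold EV
  rw [master_sum (fun ω => (A ω, M ω, C ω, N ω)) _ hgT]
  simp only [Finset.sum_product]
  refine Eq.trans (Finset.sum_congr rfl fun b _ => Finset.sum_congr rfl fun m _ =>
    Finset.sum_congr rfl fun c _ => Finset.sum_congr rfl fun n _ => key b m c n) ?_
  rw [sum_reorder4]
  exact Finset.sum_congr rfl fun c _ => Finset.sum_congr rfl fun n _ => main2 c n
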